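/- Let $\psi : \mathbb{R}^n \to \mathbb{R}$ be bounded, nonnegative, measurable with $\psi > 0$ almost everywhere, and $G_\tau$ the heat kernel. Define $E^\tau(u) = \int_{\mathbb{R}^n} \psi^2\, u\, G_\tau * (1-u)\,dx$ on functions $u$ with values in $[0,1]$. For fixed such $u^*$, suppose there exists a measurable set $A$ of positive finite measure and $c > 0$ with $u^*(x) \in (c, 1-c)$ for all $x \in A$. Then the function $t \mapsto E^\tau(u^* + t\chi_A)$, defined for $|t| < c$, satisfies $\frac{d^2}{dt^2} E^\tau(u^*+t\chi_A) = -2\int_{\mathbb{R}^n} \psi^2\, \chi_A\, G_\tau * \chi_A\,dx < 0$; in particular $u^*$ is not a minimizer of $E^\tau$ over functions valued in $[0,1]$. -/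

import Mathlib

open MeasureTheory Real Filter Asymptotics

noncomputable def G (n : ℕ) (τ : ℝ) (x : EuclideanSpace ℝ (Fin n)) : ℝ :=
  (4 * π * τ) ^ (-(n : ℝ) / 2) * Real.exp (-‖x‖ ^ 2 / (4 * τ))

noncomputable def conv {n : ℕ} (f g : EuclideanSpace ℝ (Fin n) → ℝ)
    (x : EuclideanSpace ℝ (Fin n)) : ℝ :=
  ∫ y, f (x - y) * g y

lemma G_pos {n : ℕ} {τ : ℝ} (hτ : 0 < τ) (x : EuclideanSpace ℝ (Fin n)) : 0 < G n τ x := by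
  unfold G; positivity

lemma G_meas {n : ℕ} {τ : ℝ} : Measurable (G n τ) := by
  unfold G; fun_prop

lemma G_integrable {n : ℕ} {τ : ℝ} (hτ : 0 < τ) :
    Integrable (G n τ) (volume : Measure (EuclideanSpace ℝ (Fin n))) := by
  have hb : (0:ℝ) < 1/(4*τ) := by positivity
  have h := GaussianFourier.integrable_cexp_neg_mul_sq_norm_add
    (V := EuclideanSpace ℝ (Fin n)) (b := ((1/(4*τ) : ℝ) : ℂ)) (by simpa using hb) 0 0
  have h2 : Integrable (fun v : EuclideanSpace ℝ (Fin n) => Real.exp (-‖v‖^2/(4*τ))) := by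
    have h3 := h.re
    refine h3.congr (Filter.Eventually.of_forall fun v => ?_)
    have : (-(((1:ℝ)/(4*τ) : ℝ):ℂ) * (‖v‖:ℂ)^2 + 0 * ((inner ℝ (0 : EuclideanSpace ℝ (Fin n)) v : ℝ) : ℂ))
        = ((-‖v‖^2/(4*τ) : ℝ) : ℂ) := by push_cast; ring
    simp only []
    rw [this]
    exact Complex.exp_ofReal_re _
  have h4 := h2.const_mul ((4 * π * τ) ^ (-(n : ℝ) / 2))
  exact h4.congr (Filter.Eventually.of_forall fun v => rfl)

theorem second_variation_negative_along_indicator (n : ℕ) (τ : ℝ) (hτ : 0 < τ)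
    (ψ : EuclideanSpace ℝ (Fin n) → ℝ) (hψm : Measurable ψ)
    (hψ0 : ∀ x, 0 ≤ ψ x) (hψb : ∃ C, ∀ x, ψ x ≤ C)
    (hψpos : ∀ᵐ x, 0 < ψ x)
    (u : EuclideanSpace ℝ (Fin n) → ℝ) (hum : Measurable u)
    (huI : Integrable u) (hu : ∀ x, u x ∈ Set.Icc (0 : ℝ) 1)
    (A : Set (EuclideanSpace ℝ (Fin n))) (hA : MeasurableSet A)
    (hA0 : 0 < volume A) (hAfin : volume A < ⊤)
    (c : ℝ) (hc : 0 < c) (hcA : ∀ x ∈ A, u x ∈ Set.Ioo c (1 - c)) :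
    (∀ t : ℝ, |t| < c →
        deriv (deriv (fun s : ℝ =>
            ∫ x, ψ x ^ 2 * (u x + s * A.indicator (fun _ => (1 : ℝ)) x) *
              conv (G n τ)
                (fun y => 1 - (u y + s * A.indicator (fun _ => (1 : ℝ)) y)) x)) t =
          -2 * ∫ x, ψ x ^ 2 * A.indicator (fun _ => (1 : ℝ)) x *
            conv (G n τ) (A.indicator (fun _ => (1 : ℝ))) x) ∧
      (-2 * ∫ x, ψ x ^ 2 * A.indicator (fun _ => (1 : ℝ)) x *
          conv (G n τ) (A.indicator (fun _ => (1 : ℝ))) x) < 0 ∧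
      ¬ (∀ v : EuclideanSpace ℝ (Fin n) → ℝ, Measurable v → Integrable v →
          (∀ x, v x ∈ Set.Icc (0 : ℝ) 1) →
          (∫ x, ψ x ^ 2 * u x * conv (G n τ) (fun y => 1 - u y) x) ≤
            ∫ x, ψ x ^ 2 * v x * conv (G n τ) (fun y => 1 - v y) x) := by
  obtain ⟨C, hC⟩ := hψb
  have hC0 : (0:ℝ) ≤ C := le_trans (hψ0 0) (hC 0)
  set χ : EuclideanSpace ℝ (Fin n) → ℝ := A.indicator (fun _ => (1 : ℝ)) with hχdef
  have hχm : Measurable χ := measurable_const.indicator hA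
  have hχ0 : ∀ x, 0 ≤ χ x := fun x => Set.indicator_nonneg (fun _ _ => zero_le_one) x
  have hχ1 : ∀ x, χ x ≤ 1 := fun x => Set.indicator_le_self' (fun _ _ => zero_le_one) x |>.trans_eq rfl
  have hχI : Integrable χ := by
    rw [hχdef]
    exact (integrable_indicator_iff hA).2 (integrableOn_const hAfin.ne)
  have hGI : Integrable (G n τ) := G_integrable hτ
  have hG0 : ∀ x, 0 ≤ G n τ x := fun x => (G_pos hτ x).le
  set I0 : ℝ := ∫ x, G n τ x with hI0def
  have hI0 : 0 ≤ I0 := integral_nonneg hG0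
  have hGsh : ∀ x : EuclideanSpace ℝ (Fin n), Integrable (fun y => G n τ (x - y)) :=
    fun x => (integrable_comp_sub_left (G n τ) x).2 hGI
  have hInt : ∀ f : EuclideanSpace ℝ (Fin n) → ℝ, Measurable f → (∀ y, 0 ≤ f y) → (∀ y, f y ≤ 1) →
      ∀ x, Integrable (fun y => G n τ (x - y) * f y) := by
    intro f hf h0 h1 x
    have h2 : Integrable (fun y => f y * G n τ (x - y)) := by
      refine Integrable.bdd_mul (c := 1) (hGsh x) hf.aestronglyMeasurable (Filter.Eventually.of_forall fun y => ?_)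
      rw [Real.norm_eq_abs, abs_of_nonneg (h0 y)]
      exact h1 y
    exact h2.congr (Filter.Eventually.of_forall fun y => mul_comm _ _)
  have hconv0 : ∀ f : EuclideanSpace ℝ (Fin n) → ℝ, (∀ y, 0 ≤ f y) →
      ∀ x, 0 ≤ conv (G n τ) f x := by
    intro f h0 x
    exact integral_nonneg fun y => mul_nonneg (hG0 _) (h0 y)
  have hconvle : ∀ f : EuclideanSpace ℝ (Fin n) → ℝ, Measurable f → (∀ y, 0 ≤ f y) →
      (∀ y, f y ≤ 1) → ∀ x, conv (G n τ) f x ≤ I0 := by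
    intro f hf h0 h1 x
    have h2 : conv (G n τ) f x ≤ ∫ y, G n τ (x - y) := by
      refine integral_mono (hInt f hf h0 h1 x) (hGsh x) fun y => ?_
      exact mul_le_of_le_one_right (hG0 _) (h1 y)
    calc conv (G n τ) f x ≤ ∫ y, G n τ (x - y) := h2
      _ = I0 := by rw [hI0def]; exact integral_sub_left_eq_self (G n τ) volume x
  have hconvm : ∀ f : EuclideanSpace ℝ (Fin n) → ℝ, Measurable f →
      AEStronglyMeasurable (conv (G n τ) f) volume := by
    intro f hf
    have h1 : StronglyMeasurable (fun p : (EuclideanSpace ℝ (Fin n)) × (EuclideanSpace ℝ (Fin n)) =>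
        G n τ (p.1 - p.2) * f p.2) :=
      ((G_meas.comp (measurable_fst.sub measurable_snd)).mul (hf.comp measurable_snd)).stronglyMeasurable
    exact h1.integral_prod_right'.aestronglyMeasurable
  set P : EuclideanSpace ℝ (Fin n) → ℝ := conv (G n τ) (fun y => 1 - u y) with hPdef
  set Q : EuclideanSpace ℝ (Fin n) → ℝ := conv (G n τ) χ with hQdef
  have hum1 : Measurable (fun y => 1 - u y) := measurable_const.sub hum
  have hP0 : ∀ x, 0 ≤ P x := hconv0 _ fun y => by linarith [(hu y).2]
  have hPle : ∀ x, P x ≤ I0 := hconvle _ hum1 (fun y => by linarith [(hu y).2]) (fun y => by linarith [(hu y).1])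
  have hQ0 : ∀ x, 0 ≤ Q x := hconv0 _ hχ0
  have hQle : ∀ x, Q x ≤ I0 := hconvle _ hχm hχ0 hχ1
  have hPm : AEStronglyMeasurable P volume := hconvm _ hum1
  have hQm : AEStronglyMeasurable Q volume := hconvm _ hχm
  have hsplit : ∀ (s : ℝ) x, conv (G n τ) (fun y => 1 - (u y + s * χ y)) x = P x - s * Q x := by
    intro s x
    have h1 : Integrable (fun y => G n τ (x - y) * (1 - u y)) :=
      hInt _ hum1 (fun y => by linarith [(hu y).2]) (fun y => by linarith [(hu y).1]) x
    have h2 : Integrable (fun y => G n τ (x - y) * χ y) := hInt _ hχm hχ0 hχ1 x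
    have e1 : (fun y => G n τ (x - y) * (1 - (u y + s * χ y)))
        = fun y => G n τ (x - y) * (1 - u y) - s * (G n τ (x - y) * χ y) := by
      funext y; ring
    show (∫ y, G n τ (x - y) * (1 - (u y + s * χ y))) = P x - s * Q x
    rw [e1, integral_sub h1 (h2.const_mul s), integral_const_mul]
    rfl
  have hIx : ∀ (w : EuclideanSpace ℝ (Fin n) → ℝ), Measurable w → (∀ x, 0 ≤ w x) →
      (∀ x, w x ≤ 1) → Integrable w → ∀ (R : EuclideanSpace ℝ (Fin n) → ℝ),
      AEStronglyMeasurable R volume → (∀ x, 0 ≤ R x) → (∀ x, R x ≤ I0) →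
      Integrable (fun x => ψ x ^ 2 * w x * R x) := by
    intro w hwm hw0 hw1 hwI R hRm hR0 hRle
    refine Integrable.mono' (hwI.const_mul (C ^ 2 * I0)) ?_ ?_
    · exact (((hψm.pow_const 2).mul hwm).aestronglyMeasurable.mul hRm)
    · refine Filter.Eventually.of_forall fun x => ?_
      rw [Real.norm_eq_abs, abs_of_nonneg (mul_nonneg (mul_nonneg (sq_nonneg _) (hw0 x)) (hR0 x))]
      have h1 : ψ x ^ 2 * w x ≤ C ^ 2 * w x :=
        mul_le_mul_of_nonneg_right (pow_le_pow_left₀ (hψ0 x) (hC x) 2) (hw0 x)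
      have h2 : ψ x ^ 2 * w x * R x ≤ C ^ 2 * w x * I0 :=
        mul_le_mul h1 (hRle x) (hR0 x) (mul_nonneg (sq_nonneg C) (hw0 x))
      calc ψ x ^ 2 * w x * R x ≤ C ^ 2 * w x * I0 := h2
        _ = C ^ 2 * I0 * w x := by ring
  have h_uP : Integrable (fun x => ψ x ^ 2 * u x * P x) :=
    hIx u hum (fun x => (hu x).1) (fun x => (hu x).2) huI P hPm hP0 hPle
  have h_chiP : Integrable (fun x => ψ x ^ 2 * χ x * P x) := hIx χ hχm hχ0 hχ1 hχI P hPm hP0 hPle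
  have h_uQ : Integrable (fun x => ψ x ^ 2 * u x * Q x) :=
    hIx u hum (fun x => (hu x).1) (fun x => (hu x).2) huI Q hQm hQ0 hQle
  have h_chiQ : Integrable (fun x => ψ x ^ 2 * χ x * Q x) := hIx χ hχm hχ0 hχ1 hχI Q hQm hQ0 hQle
  set a : ℝ := ∫ x, ψ x ^ 2 * u x * P x with hadef
  set b : ℝ := ∫ x, (ψ x ^ 2 * χ x * P x - ψ x ^ 2 * u x * Q x) with hbdef
  set K : ℝ := ∫ x, ψ x ^ 2 * χ x * Q x with hKdef
  have Feq : (fun s : ℝ => ∫ x, ψ x ^ 2 * (u x + s * χ x) *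
      conv (G n τ) (fun y => 1 - (u y + s * χ y)) x) = fun s : ℝ => a + b * s + -K * s ^ 2 := by
    funext s
    have e1 : ∀ x, ψ x ^ 2 * (u x + s * χ x) * conv (G n τ) (fun y => 1 - (u y + s * χ y)) x
        = ψ x ^ 2 * u x * P x + s * (ψ x ^ 2 * χ x * P x - ψ x ^ 2 * u x * Q x)
          + s ^ 2 * -(ψ x ^ 2 * χ x * Q x) := by
      intro x; rw [hsplit s x]; ring
    simp only [e1]
    have i1 : Integrable (fun x => ψ x ^ 2 * χ x * P x - ψ x ^ 2 * u x * Q x) := h_chiP.sub h_uQ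
    have i2 : Integrable (fun x => ψ x ^ 2 * u x * P x
        + s * (ψ x ^ 2 * χ x * P x - ψ x ^ 2 * u x * Q x)) := h_uP.add (i1.const_mul s)
    have i3 : Integrable (fun x => s ^ 2 * -(ψ x ^ 2 * χ x * Q x)) := (h_chiQ.neg).const_mul _
    rw [integral_add i2 i3, integral_add h_uP (i1.const_mul s), integral_const_mul,
      integral_const_mul, integral_neg]
    rw [hadef, hbdef, hKdef]
    ring
  have hd1 : deriv (fun s : ℝ => a + b * s + -K * s ^ 2) = fun s : ℝ => b + -K * (2 * s) := by
    funext s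
    have h : HasDerivAt (fun s : ℝ => a + b * s + -K * s ^ 2) (0 + b * 1 + -K * (2 * s ^ 1)) s :=
      ((hasDerivAt_const s a).add ((hasDerivAt_id s).const_mul b)).add
        ((hasDerivAt_pow 2 s).const_mul (-K))
    rw [h.deriv]; ring
  have hd2 : ∀ t : ℝ, deriv (fun s : ℝ => b + -K * (2 * s)) t = -2 * K := by
    intro t
    have h : HasDerivAt (fun s : ℝ => b + -K * (2 * s)) (0 + -K * (2 * 1)) t :=
      (hasDerivAt_const t b).add (((hasDerivAt_id t).const_mul 2).const_mul (-K))
    rw [h.deriv]; ring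
  have hQpos : ∀ x, 0 < Q x := by
    intro x
    have hint : Integrable (fun y => G n τ (x - y) * χ y) := hInt _ hχm hχ0 hχ1 x
    have hQx : Q x = ∫ y, G n τ (x - y) * χ y := rfl
    rw [hQx, integral_pos_iff_support_of_nonneg (fun y => mul_nonneg (hG0 _) (hχ0 y)) hint]
    refine lt_of_lt_of_le hA0 (measure_mono fun y hy => ?_)
    simp only [Function.mem_support]
    have : χ y = 1 := by rw [hχdef]; simp [hy]
    rw [this, mul_one]
    exact (G_pos hτ _).ne'
  have hKpos : 0 < K := by
    rw [hKdef, integral_pos_iff_support_of_nonneg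
      (fun x => mul_nonneg (mul_nonneg (sq_nonneg _) (hχ0 x)) (hQ0 x)) h_chiQ]
    have hS : volume {x | ¬ 0 < ψ x} = 0 := hψpos
    have hsub : A ∩ {x | 0 < ψ x} ⊆ Function.support (fun x => ψ x ^ 2 * χ x * Q x) := by
      rintro x ⟨hxA, hxψ⟩
      simp only [Function.mem_support]
      have hχx : χ x = 1 := by rw [hχdef]; simp [hxA]
      rw [hχx]
      exact (mul_pos (mul_pos (pow_pos hxψ 2) one_pos) (hQpos x)).ne'
    have h1 : volume A ≤ volume (A ∩ {x | 0 < ψ x}) + volume (A \ {x | 0 < ψ x}) :=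
      measure_le_inter_add_diff _ _ _
    have h2 : volume (A \ {x | 0 < ψ x}) = 0 :=
      measure_mono_null (fun x hx => hx.2) hS
    have h3 : 0 < volume (A ∩ {x | 0 < ψ x}) := by
      by_contra h
      push_neg at h
      simp only [le_zero_iff] at h
      rw [h, zero_add, h2] at h1
      exact absurd (le_antisymm h1 zero_le) hA0.ne'
    exact lt_of_lt_of_le h3 (measure_mono hsub)
  refine ⟨?_, by linarith, ?_⟩
  · intro t ht
    rw [Feq, hd1, hd2]
  · intro hmin
    obtain ⟨t0, ht0abs, ht0b, ht0ne⟩ : ∃ t0 : ℝ, |t0| = c / 2 ∧ b * t0 ≤ 0 ∧ t0 ≠ 0 := by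
      rcases le_or_gt 0 b with hb | hb
      · refine ⟨-(c / 2), by rw [abs_neg, abs_of_nonneg (by linarith)], by nlinarith, ?_⟩
        intro h; rw [neg_eq_zero] at h; linarith
      · exact ⟨c / 2, abs_of_nonneg (by linarith), by nlinarith, by intro h; linarith⟩
    have hv01 : ∀ x, u x + t0 * χ x ∈ Set.Icc (0:ℝ) 1 := by
      intro x
      have habs := abs_le.1 ht0abs.le
      by_cases hx : x ∈ A
      · have hχx : χ x = 1 := by rw [hχdef]; simp [hx]
        have hux := hcA x hx
        rw [hχx, mul_one]
        exact ⟨by linarith [hux.1, habs.1], by linarith [hux.2, habs.2]⟩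
      · have hχx : χ x = 0 := by rw [hχdef]; simp [hx]
        rw [hχx, mul_zero, add_zero]
        exact hu x
    have hle := hmin (fun x => u x + t0 * χ x) (hum.add (hχm.const_mul t0))
      (huI.add (hχI.const_mul t0)) hv01
    have h1 : (∫ x, ψ x ^ 2 * (u x + t0 * χ x) *
        conv (G n τ) (fun y => 1 - (u y + t0 * χ y)) x) = a + b * t0 + -K * t0 ^ 2 := by
      have := congrFun Feq t0
      simpa using this
    have ht02 : 0 < t0 ^ 2 := by positivity
    rw [h1] at hle
    nlinarith
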